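/- arXiv:2604.10802 — 2 statements merged into one kernel-verified Lean document; each statement's English description precedes it below -/
import Mathlib

section
/- Let p be an odd prime (or p = 2 with k ≥ 2), 1 ≤ k ≤ ν, and let Ω_p^{k,ν} act on ℤ/p^νℤ by multiplication. Then the second group cohomology H²(Ω_p^{k,ν}, ℤ/p^νℤ) vanishes. -/
open groupCohomology

/-- The representation of a subgroup `H` of `(ZMod n)ˣ` on `ZMod n` by multiplication. -/
noncomputable def mulRep (n : ℕ) (H : Subgroup (ZMod n)ˣ) : Representation ℤ H (ZMod n) :=
  ((Algebra.lmul ℤ (ZMod n)).toRingHom.toMonoidHom).comp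
    ((Units.coeHom (ZMod n)).comp H.subtype)

/-!
When `k + 2 ≤ p * k` (that is, `p` odd, or `p = 2` and `k ≥ 2`), the binomial expansion gives
`(1 + p ^ k) ^ (p ^ m) = 1 + p ^ (k + m) * (1 + p * y)`. Hence `τ = 1 + p ^ k` has order
`p ^ (ν - k) = |Ω|` and generates `Ω`, and the norm of `Ω` acts as multiplication by
`∑_{j < p ^ (ν - k)} τ ^ j = p ^ (ν - k) * (unit)`. The `τ`-fixed points of `ℤ/p^νℤ` are the
multiples of `p ^ (ν - k)`, so they are all norms, and `H²` of a cyclic group is the quotient of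
the fixed points by the norms.
-/

open Finset CategoryTheory

universe u

theorem Rep.FiniteCyclicGroup.subsingleton_groupCohomology_of_even {k G : Type u} [CommRing k]
    [CommGroup G] [Fintype G] (A : Rep k G) (g : G) (hg : ∀ x, x ∈ Subgroup.zpowers g)
    (i : ℕ) [NeZero i] (hi : Even i)
    (hA : ∀ a : A, A.ρ g a = a → a ∈ LinearMap.range A.ρ.norm) :
    Subsingleton (groupCohomology A i) := by
  have hsurj : Function.Surjective (groupCohomologyπEven A g hg i hi) := by
    refine (ModuleCat.epi_iff_surjective _).1 ?_
    unfold groupCohomologyπEven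
    exact epi_comp' (@IsIso.epi_of_iso _ _ _ _ _ (Iso.isIso_inv _))
      (epi_comp' inferInstance inferInstance)
  refine subsingleton_of_forall_eq 0 fun x => ?_
  obtain ⟨a, rfl⟩ := hsurj x
  rw [groupCohomologyπEven_eq_zero_iff]
  have ha := LinearMap.mem_ker.1 a.2
  exact hA a.1 (by simpa [sub_hom, Rep.applyAsHom, sub_eq_zero] using ha)

theorem Fintype.sum_eq_sum_range_orderOf_pow {G M : Type*} [Group G] [Fintype G]
    [AddCommMonoid M] {g : G} (hg : ∀ x, x ∈ Subgroup.zpowers g) (f : G → M) :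
    ∑ x, f x = ∑ i ∈ range (orderOf g), f (g ^ i) := by
  classical
  rw [← IsCyclic.image_range_orderOf hg, sum_image]
  exact fun i hi j hj => pow_injOn_Iio_orderOf (by simpa using hi) (by simpa using hj)

theorem ZMod.exists_eq_mul_of_mul_eq_zero {n a b : ℕ} [NeZero n] (hab : a * b = n) {m : ZMod n}
    (h : (a : ZMod n) * m = 0) : ∃ d : ZMod n, m = b * d := by
  subst hab
  have ha : 0 < a := Nat.pos_of_ne_zero (left_ne_zero_of_mul (NeZero.ne (a * b)))
  have hdvd : a * b ∣ a * m.val := by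
    rw [← ZMod.natCast_eq_zero_iff, Nat.cast_mul, ZMod.natCast_zmod_val, h]
  obtain ⟨d, hd⟩ := (Nat.mul_dvd_mul_iff_left ha).1 hdvd
  exact ⟨d, by rw [← ZMod.natCast_zmod_val m, hd, Nat.cast_mul]⟩

theorem ZMod.card_ker_unitsMap_mul_totient {m n : ℕ} [NeZero n] (h : m ∣ n) :
    Nat.card (ZMod.unitsMap h).ker * m.totient = n.totient := by
  have : NeZero m := ⟨ne_zero_of_dvd_ne_zero (NeZero.ne n) h⟩
  have hindex : (ZMod.unitsMap h).ker.index = m.totient := by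
    rw [Subgroup.index_ker, MonoidHom.range_eq_top.2 (ZMod.unitsMap_surjective h),
      Subgroup.card_top, Nat.card_eq_fintype_card, ZMod.card_units_eq_totient]
  rw [← hindex, Subgroup.card_mul_index, Nat.card_eq_fintype_card, ZMod.card_units_eq_totient]

section OneAddPrimePow

variable {p k : ℕ} (hp : p.Prime) (hpk : k + 2 ≤ p * k)
include hp hpk

theorem ZMod.orderOf_one_add_prime_pow {ν : ℕ} (hkν : k ≤ ν) :
    orderOf (1 + p ^ k : ZMod (p ^ ν)) = p ^ (ν - k) := by
  obtain ⟨n, rfl⟩ := Nat.exists_eq_add_of_le' hkν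
  simpa using ZMod.orderOf_one_add_mul_prime_pow hp k (by rintro rfl; simp at hpk) hpk 1
    (by simpa using (Nat.prime_iff_prime_int.1 hp).not_dvd_one) n

theorem exists_geom_sum_one_add_prime_pow (m : ℕ) :
    ∃ y : ℤ, ∑ j ∈ range (p ^ m), (1 + p ^ k : ℤ) ^ j = p ^ m * (1 + p * y) := by
  obtain ⟨y, hy⟩ := ZMod.exists_one_add_mul_pow_prime_pow_eq (R := ℤ) (u := p ^ k) (v := p) hp
    (dvd_pow_self _ (by rintro rfl; simp at hpk))
    (by rw [← pow_succ', ← pow_succ, ← pow_mul, mul_comm]; exact pow_dvd_pow _ hpk) 1 m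
  refine ⟨y, mul_right_cancel₀ (pow_ne_zero k (Int.natCast_ne_zero.2 hp.ne_zero)) ?_⟩
  rw [mul_one] at hy
  calc (∑ j ∈ range (p ^ m), (1 + (p : ℤ) ^ k) ^ j) * p ^ k
      = (∑ j ∈ range (p ^ m), (1 + (p : ℤ) ^ k) ^ j) * (1 + p ^ k - 1) := by ring
    _ = p ^ m * (1 + p * y) * p ^ k := by rw [geom_sum_mul, hy]; ring

variable {ν : ℕ} (hkν : k ≤ ν)
include hkν

theorem ZMod.exists_generator_ker_unitsMap_prime_pow :
    ∃ τ : (ZMod.unitsMap (pow_dvd_pow p hkν)).ker,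
      ((τ : (ZMod (p ^ ν))ˣ) : ZMod (p ^ ν)) = 1 + p ^ k ∧ orderOf τ = p ^ (ν - k) ∧
      ∀ x, x ∈ Subgroup.zpowers τ := by
  have : NeZero p := ⟨hp.ne_zero⟩
  have horder := ZMod.orderOf_one_add_prime_pow hp hpk hkν
  have hunit : IsUnit (1 + p ^ k : ZMod (p ^ ν)) :=
    (orderOf_pos_iff.1 (horder ▸ pow_pos hp.pos _)).isUnit
  have hmem : hunit.unit ∈ (ZMod.unitsMap (pow_dvd_pow p hkν)).ker := by
    rw [MonoidHom.mem_ker, Units.ext_iff]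
    change ZMod.castHom (pow_dvd_pow p hkν) (ZMod (p ^ k)) (1 + (p : ZMod (p ^ ν)) ^ k) = 1
    rw [map_add, map_one, map_pow, map_natCast, ← Nat.cast_pow, ZMod.natCast_self, add_zero]
  have hτ : orderOf (⟨hunit.unit, hmem⟩ : (ZMod.unitsMap (pow_dvd_pow p hkν)).ker) =
      p ^ (ν - k) := by
    rw [← Subgroup.orderOf_coe, ← orderOf_units, IsUnit.unit_spec, horder]
  refine ⟨⟨hunit.unit, hmem⟩, rfl, hτ, fun x => ?_⟩
  suffices Subgroup.zpowers _ = ⊤ from this ▸ Subgroup.mem_top x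
  refine Subgroup.eq_top_of_card_eq _ ?_
  have hk : 0 < k := Nat.pos_of_mul_pos_left (by omega : 0 < p * k)
  have hcard := ZMod.card_ker_unitsMap_mul_totient (pow_dvd_pow p hkν)
  rw [Nat.totient_prime_pow hp hk, Nat.totient_prime_pow hp (by omega),
    show ν - 1 = ν - k + (k - 1) by omega, pow_add, mul_assoc] at hcard
  rw [Nat.card_zpowers, hτ]
  have hpos : 0 < p ^ (k - 1) * (p - 1) :=
    Nat.mul_pos (pow_pos hp.pos _) (Nat.sub_pos_of_lt hp.one_lt)
  exact (Nat.eq_of_mul_eq_mul_right hpos hcard).symm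

theorem mem_range_norm_mulRep_of_one_add_prime_pow_mul_eq [NeZero p]
    {τ : (ZMod.unitsMap (pow_dvd_pow p hkν)).ker}
    (hτ : ((τ : (ZMod (p ^ ν))ˣ) : ZMod (p ^ ν)) = 1 + p ^ k) (horder : orderOf τ = p ^ (ν - k))
    (hgen : ∀ x, x ∈ Subgroup.zpowers τ) {a : ZMod (p ^ ν)} (ha : (1 + p ^ k) * a = a) :
    a ∈ LinearMap.range (mulRep (p ^ ν) (ZMod.unitsMap (pow_dvd_pow p hkν)).ker).norm := by
  obtain ⟨y, hy⟩ := exists_geom_sum_one_add_prime_pow hp hpk (ν - k)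
  have hsum : ∑ j ∈ range (p ^ (ν - k)), (1 + p ^ k : ZMod (p ^ ν)) ^ j
      = p ^ (ν - k) * (1 + p * y) := by
    exact_mod_cast congrArg (Int.cast : ℤ → ZMod (p ^ ν)) hy
  have hnorm : ∀ b, (mulRep (p ^ ν) (ZMod.unitsMap (pow_dvd_pow p hkν)).ker).norm b
      = p ^ (ν - k) * (1 + p * y) * b := by
    intro b
    rw [Representation.norm, LinearMap.sum_apply, Fintype.sum_eq_sum_range_orderOf_pow hgen,
      horder, ← hsum, sum_mul]
    refine sum_congr rfl fun j _ => ?_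
    simp [mulRep, hτ]
  have hunit : IsUnit (1 + p * y : ZMod (p ^ ν)) :=
    IsNilpotent.isUnit_one_add ⟨ν, by rw [mul_pow, ← Nat.cast_pow, ZMod.natCast_self, zero_mul]⟩
  obtain ⟨d, rfl⟩ := ZMod.exists_eq_mul_of_mul_eq_zero (a := p ^ k) (b := p ^ (ν - k))
    (m := a) (by rw [← pow_add, Nat.add_sub_cancel' hkν]) (by push_cast; linear_combination ha)
  refine ⟨(hunit.unit⁻¹ : (ZMod (p ^ ν))ˣ) * d, ?_⟩
  rw [hnorm, mul_assoc, ← mul_assoc (1 + _), IsUnit.mul_val_inv, one_mul]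
  push_cast
  ring

end OneAddPrimePow

/-- Let `p` be an odd prime (or `p = 2` with `k ≥ 2`), `1 ≤ k ≤ ν`, and let the cyclic group
`Ω_p^{k,ν} = ker((ℤ/p^νℤ)ˣ → (ℤ/p^kℤ)ˣ)` act on `ℤ/p^νℤ` by multiplication. Then the second
group cohomology `H²(Ω_p^{k,ν}, ℤ/p^νℤ)` vanishes. -/
theorem stmt_3 (p : ℕ) (hp : p.Prime) (k ν : ℕ) (hk : 1 ≤ k) (hkν : k ≤ ν)
    (h2 : Odd p ∨ (p = 2 ∧ 2 ≤ k)) :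
    Subsingleton (groupCohomology.H2
      (Rep.of (mulRep (p ^ ν) (ZMod.unitsMap (pow_dvd_pow p hkν)).ker))) := by
  have : NeZero p := ⟨hp.ne_zero⟩
  have hpk : k + 2 ≤ p * k := by
    rcases h2 with ⟨r, rfl⟩ | ⟨rfl, hk2⟩
    · have hr : 1 ≤ r := by have := hp.two_le; omega
      nlinarith
    · omega
  obtain ⟨τ, hτ, horder, hgen⟩ := ZMod.exists_generator_ker_unitsMap_prime_pow hp hpk hkν
  exact Rep.FiniteCyclicGroup.subsingleton_groupCohomology_of_even _ τ hgen 2 even_two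
    fun a ha => mem_range_norm_mulRep_of_one_add_prime_pow_mul_eq hp hpk hkν hτ horder hgen
      (by rw [← hτ]; exact ha)
end

section
/- Let K be a field of characteristic 0 with finite maximal abelian subextension K_ab/ℚ, and let p be a prime not dividing λ, the number of roots of unity in K. Then for every positive integer n, H¹(Gal(K(ζₙ)/K), μ_{p^{v_p(n)}}) = 0, where v_p is the p-adic valuation. -/
set_option synthInstance.maxHeartbeats 1000000
noncomputable section

/-- The homomorphism from the Galois group `L ≃ₐ[K] L` to the automorphisms of the group of
`n`-th roots of unity of `L`. -/
def galToMulAutRoots (K L : Type*) [Field K] [Field L] [Algebra K L] (n : ℕ) :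
    (L ≃ₐ[K] L) →* MulAut (rootsOfUnity n L) where
  toFun σ := MulEquiv.restrictRootsOfUnity (σ : L ≃* L) n
  map_one' := by
    ext ζ
    rfl
  map_mul' σ τ := by
    ext ζ
    rfl

/-- The natural action of the Galois group `L ≃ₐ[K] L` on the group of `n`-th roots of
unity of `L`. -/
instance galRootsAction (K L : Type*) [Field K] [Field L] [Algebra K L] (n : ℕ) :
    MulDistribMulAction (L ≃ₐ[K] L) (rootsOfUnity n L) :=
  MulDistribMulAction.compHom _ (galToMulAutRoots K L n)

/-- The maximal abelian subextension of `K/ℚ`. -/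
def maxAb (K : Type*) [Field K] [CharZero K] : IntermediateField ℚ K :=
  ⨆ F ∈ {F : IntermediateField ℚ K |
      IsGalois ℚ ↥F ∧ ∀ σ τ : ↥F ≃ₐ[ℚ] ↥F, σ * τ = τ * σ}, F

/-- The number of roots of unity contained in a field `F`. -/
def numRootsOfUnity (F : Type*) [Field F] : ℕ :=
  Nat.card (CommGroup.torsion Fˣ)

/-!
`Gal(K(ζₙ)/K)` is abelian, so by Sah's lemma `H¹(G, M)` vanishes for `M = μ_{p^m}` as soon as
some `g ∈ G` has no nontrivial fixed point in `M`: then `x ↦ g • x / x` is bijective on the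
finite group `M`. A nontrivial fixed point of `g` in `M` has a power that is a primitive `p`-th
root of unity, and then `g` fixes every `p`-th root of unity. So if `L` contains no primitive
`p`-th root of unity, any `g` works; if it contains one, it is not in `K` because `p ∤ λ`, and
Galois theory provides a `g` moving it.
-/

open groupCohomology

section Sah

variable {G M : Type*} [Group G] [CommGroup M] [MulDistribMulAction G M]

def smulDivSelf (g : G) : M →* M where
  toFun x := g • x / x
  map_one' := by simp
  map_mul' x y := by simp only [smul_mul', div_mul_div_comm]

lemma smulDivSelf_apply (g : G) (x : M) : smulDivSelf g x = g • x / x := rfl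

lemma smulDivSelf_bijective_of_fixed_eq_one [Finite M] {g : G}
    (hg : ∀ x : M, g • x = x → x = 1) : Function.Bijective (smulDivSelf (M := M) g) := by
  refine Finite.injective_iff_bijective.1 ((injective_iff_map_eq_one _).2 fun x hx => hg x ?_)
  rwa [smulDivSelf_apply, div_eq_one] at hx

/-- Sah's lemma. For `σ g = g σ` the cocycle identity reads `T (f σ) = σ • f g / f g`, where
`T = smulDivSelf g` commutes with the action. -/
lemma isMulCoboundary₁_of_isMulCocycle₁_of_smulDivSelf_bijective {g : G}
    (hg : ∀ σ : G, σ * g = g * σ) (hbij : Function.Bijective (smulDivSelf (M := M) g))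
    {f : G → M} (hf : IsMulCocycle₁ f) : IsMulCoboundary₁ f := by
  let T : M ≃* M := MulEquiv.ofBijective _ hbij
  have hT : ∀ (σ : G) (x : M), T (σ • x) = σ • T x := fun σ x => by
    simp only [T, MulEquiv.ofBijective_apply, smulDivSelf_apply, smul_div', smul_smul, hg]
  refine ⟨T.symm (f g), fun σ => T.injective ?_⟩
  rw [map_div, hT, T.apply_symm_apply]
  change σ • f g / f g = g • f σ / f σ
  rw [div_eq_div_iff_mul_eq_mul, ← hf, hg, hf]

end Sah

lemma subsingleton_H1_of_smulDivSelf_bijective {G M : Type} [Group G] [CommGroup M]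
    [MulDistribMulAction G M] {g : G} (hg : ∀ σ : G, σ * g = g * σ)
    (hbij : Function.Bijective (smulDivSelf (M := M) g)) :
    Subsingleton (H1 (Rep.ofMulDistribMulAction G M)) := by
  refine subsingleton_of_forall_eq 0 fun x => H1_induction_on x fun f => ?_
  refine (H1π_eq_zero_iff _).2 (coboundariesOfIsMulCoboundary₁ ?_).2
  exact isMulCoboundary₁_of_isMulCocycle₁_of_smulDivSelf_bijective hg hbij
    (isMulCocycle₁_of_mem_cocycles₁ _ f.2)

lemma exists_pow_isPrimitiveRoot_of_pow_prime_pow_eq_one {M : Type*} [CommMonoid M] {p m : ℕ}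
    (hp : p.Prime) {x : M} (hx : x ^ p ^ m = 1) (hx1 : x ≠ 1) :
    ∃ k, IsPrimitiveRoot (x ^ k) p := by
  obtain ⟨j, -, hj⟩ := (Nat.dvd_prime_pow hp).1 (orderOf_dvd_of_pow_eq_one hx)
  have hj0 : j ≠ 0 := by rintro rfl; exact hx1 (orderOf_eq_one_iff.1 hj)
  have hpx : p ∣ orderOf x := hj ▸ dvd_pow_self p hj0
  have hxpos : 0 < orderOf x := hj ▸ pow_pos hp.pos j
  refine ⟨orderOf x / p, ?_⟩
  simpa [Nat.div_div_self hpx hxpos.ne'] using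
    (IsPrimitiveRoot.orderOf x).pow_of_dvd (Nat.div_pos (Nat.le_of_dvd hxpos hpx) hp.pos).ne'
      (Nat.div_dvd_of_dvd hpx)

lemma IsPrimitiveRoot.map_eq_self_of_pow_eq_one {R F : Type*} [CommRing R] [IsDomain R]
    [FunLike F R R] [MonoidHomClass F R R] {f : F} {k : ℕ} [NeZero k] {ζ : R}
    (hζ : IsPrimitiveRoot ζ k) (hfζ : f ζ = ζ) {x : R} (hx : x ^ k = 1) : f x = x := by
  obtain ⟨i, -, rfl⟩ := hζ.eq_pow_of_pow_eq_one hx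
  rw [map_pow, hfζ]

lemma IsPrimitiveRoot.dvd_numRootsOfUnity {F : Type*} [Field F] {k : ℕ} [NeZero k] {ζ : F}
    (hζ : IsPrimitiveRoot ζ k) : k ∣ numRootsOfUnity F := by
  have hu := hζ.isUnit_unit (NeZero.ne k)
  have hmem : (hζ.isUnit (NeZero.ne k)).unit ∈ CommGroup.torsion Fˣ :=
    isOfFinOrder_iff_pow_eq_one.2 ⟨k, NeZero.pos k, hu.pow_eq_one⟩
  have := orderOf_dvd_natCard (⟨_, hmem⟩ : CommGroup.torsion Fˣ)
  rwa [Subgroup.orderOf_mk, ← hu.eq_orderOf] at this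

section Galois

variable {K L : Type*} [Field K] [Field L] [Algebra K L]

lemma val_smul_rootsOfUnity (σ : L ≃ₐ[K] L) {k : ℕ} (x : rootsOfUnity k L) :
    (((σ • x : rootsOfUnity k L) : Lˣ) : L) = σ ((x : Lˣ) : L) := rfl

lemma exists_algEquiv_apply_ne_of_not_dvd_numRootsOfUnity [IsGalois K L] {p : ℕ} [NeZero p]
    (hpK : ¬ p ∣ numRootsOfUnity K) {ζ : L} (hζ : IsPrimitiveRoot ζ p) :
    ∃ σ : L ≃ₐ[K] L, σ ζ ≠ ζ := by
  by_contra! hfix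
  obtain ⟨y, rfl⟩ := (InfiniteGalois.mem_range_algebraMap_iff_fixed ζ).2 hfix
  exact hpK (hζ.of_map_of_injective (algebraMap K L).injective).dvd_numRootsOfUnity

lemma exists_algEquiv_fixed_rootsOfUnity_eq_one [IsGalois K L] {p : ℕ} (hp : p.Prime)
    (hpK : ¬ p ∣ numRootsOfUnity K) (m : ℕ) :
    ∃ σ : L ≃ₐ[K] L, ∀ x : rootsOfUnity (p ^ m) L, σ • x = x → x = 1 := by
  have : NeZero p := ⟨hp.ne_zero⟩
  have fixed_primitiveRoot (σ : L ≃ₐ[K] L) (x : rootsOfUnity (p ^ m) L) (hσx : σ • x = x)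
      (hx1 : x ≠ 1) : ∃ d : L, IsPrimitiveRoot d p ∧ σ d = d := by
    have hxL : ((x : Lˣ) : L) ^ p ^ m = 1 := by
      rw [← Units.val_pow_eq_pow_val, (mem_rootsOfUnity _ _).1 x.2, Units.val_one]
    obtain ⟨k, hk⟩ := exists_pow_isPrimitiveRoot_of_pow_prime_pow_eq_one hp hxL
      fun h => hx1 (Subtype.ext (Units.ext h))
    refine ⟨_, hk, ?_⟩
    rw [map_pow, ← val_smul_rootsOfUnity, hσx]
  by_cases hμp : ∃ ζ : L, IsPrimitiveRoot ζ p
  · obtain ⟨ζ, hζ⟩ := hμp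
    obtain ⟨σ, hσ⟩ := exists_algEquiv_apply_ne_of_not_dvd_numRootsOfUnity hpK hζ
    refine ⟨σ, fun x hσx => by_contra fun hx1 => ?_⟩
    obtain ⟨d, hd, hσd⟩ := fixed_primitiveRoot σ x hσx hx1
    exact hσ (hd.map_eq_self_of_pow_eq_one hσd hζ.pow_eq_one)
  · refine ⟨1, fun x hσx => by_contra fun hx1 => ?_⟩
    obtain ⟨d, hd, -⟩ := fixed_primitiveRoot 1 x hσx hx1
    exact hμp ⟨d, hd⟩

end Galois

lemma isCyclotomicExtension_adjoin_pow_eq_one (K : Type*) {Ω : Type*} [Field K] [Field Ω]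
    [Algebra K Ω] [IsSepClosed Ω] {n : ℕ} (hn : (n : Ω) ≠ 0) :
    IsCyclotomicExtension {n} K (IntermediateField.adjoin K {z : Ω | z ^ n = 1}) := by
  have hn0 : n ≠ 0 := by rintro rfl; exact hn Nat.cast_zero
  have := IsSepClosed.isCyclotomicExtension {n} Ω fun a ha _ => ⟨ha ▸ hn⟩
  have hroots : {z : Ω | z ^ n = 1} = {z | ∃ m ∈ ({n} : Set ℕ), m ≠ 0 ∧ z ^ m = 1} := by
    ext z
    simp [hn0]
  rw [hroots]
  exact IntermediateField.isCyclotomicExtension_adjoin_of_exists_isPrimitiveRoot {n} K Ω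
    fun a ha ha0 => IsCyclotomicExtension.exists_isPrimitiveRoot Ω Ω ha ha0

theorem stmt_10_general (K Ω : Type) [Field K] [CharZero K] [Field Ω] [Algebra K Ω]
    [IsAlgClosed Ω]
    (p : ℕ) (hp : p.Prime) (hpl : ¬ p ∣ numRootsOfUnity K) (n : ℕ) (hn : 0 < n)
    (L : IntermediateField K Ω) (hL : L = IntermediateField.adjoin K {z : Ω | z ^ n = 1}) :
    Subsingleton (groupCohomology.H1
      (Rep.ofMulDistribMulAction (↥L ≃ₐ[K] ↥L)
        (rootsOfUnity (p ^ (n.factorization p)) ↥L))) := by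
  have hnΩ : (n : Ω) ≠ 0 := by
    rw [← map_natCast (algebraMap K Ω)]
    exact (map_ne_zero _).2 (Nat.cast_ne_zero.2 hn.ne')
  subst hL
  have := (isCyclotomicExtension_adjoin_pow_eq_one K hnΩ).isAbelianGalois
  have : NeZero (p ^ n.factorization p) := ⟨pow_ne_zero _ hp.ne_zero⟩
  obtain ⟨g, hg⟩ := exists_algEquiv_fixed_rootsOfUnity_eq_one
    (L := IntermediateField.adjoin K {z : Ω | z ^ n = 1}) hp hpl (n.factorization p)
  exact subsingleton_H1_of_smulDivSelf_bijective
    (fun σ => isMulCommutative_iff.1 inferInstance σ g)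
    (smulDivSelf_bijective_of_fixed_eq_one hg)

/-- Let `K` be a field of characteristic 0 with finite maximal abelian subextension
`K_ab/ℚ`, and let `p` be a prime not dividing `λ`, the number of roots of unity in `K`. Then
for every positive integer `n`, `H¹(Gal(K(ζₙ)/K), μ_{p^{v_p(n)}}) = 0`, where `v_p` is the
`p`-adic valuation. -/
theorem stmt_10 (K Ω : Type) [Field K] [CharZero K] [Field Ω] [Algebra K Ω]
    [IsAlgClosed Ω] [Algebra.IsAlgebraic K Ω]
    (hfin : FiniteDimensional ℚ ↥(maxAb K))
    (p : ℕ) (hp : p.Prime) (hpl : ¬ p ∣ numRootsOfUnity K) (n : ℕ) (hn : 0 < n)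
    (L : IntermediateField K Ω) (hL : L = IntermediateField.adjoin K {z : Ω | z ^ n = 1}) :
    Subsingleton (groupCohomology.H1
      (Rep.ofMulDistribMulAction (↥L ≃ₐ[K] ↥L)
        (rootsOfUnity (p ^ (n.factorization p)) ↥L))) :=
  stmt_10_general K Ω p hp hpl n hn L hL

end
end
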